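/- Let P be the linear operator on the (2j+1)²-dimensional space with basis indexed by (m₁,m₂), -j ≤ m₁,m₂ ≤ j (j a nonnegative integer), with matrix entries P_{(m₁,m₂),(m₁',m₂')} = (1/2)[1+(-1)^{m₁}]·(1/2)[δ_{m₁,m₁'}δ_{m₂,m₂'} + i^{m₁}(-1)^{j+m₂}i^{m₂}δ_{m₁,m₁'}δ_{m₂',-m₂}]. Then P is idempotent: P² = P. -/
import Mathlib


open Complex

/-- The projection operator `P^{0,j}` onto `C₈`-invariant vectors in `D^{(j,j)}`
(for the cubic 3-manifold `C2`): indices `(m₁,m₂)` with `-j ≤ m₁,m₂ ≤ j` are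
encoded by pairs in `Fin (2j+1) × Fin (2j+1)` via `m = i - j`, and
`P_{(m₁,m₂),(m₁',m₂')} = (1/2)[1+(-1)^{m₁}]·(1/2)[δ_{m₁,m₁'}δ_{m₂,m₂'}
 + i^{m₁}(-1)^{j+m₂}i^{m₂}δ_{m₁,m₁'}δ_{m₂',-m₂}]`. -/
noncomputable def P (j : ℕ) :
    Matrix (Fin (2 * j + 1) × Fin (2 * j + 1)) (Fin (2 * j + 1) × Fin (2 * j + 1)) ℂ :=
  fun p q =>
    let m1 : ℤ := (p.1 : ℤ) - j
    let m2 : ℤ := (p.2 : ℤ) - j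
    let m1' : ℤ := (q.1 : ℤ) - j
    let m2' : ℤ := (q.2 : ℤ) - j
    (1 / 2) * (1 + (-1 : ℂ) ^ m1) * ((1 / 2) *
      ((if m1 = m1' ∧ m2 = m2' then 1 else 0) +
        Complex.I ^ m1 * (-1 : ℂ) ^ ((j : ℤ) + m2) * Complex.I ^ m2 *
          (if m1 = m1' ∧ m2' = -m2 then 1 else 0)))

noncomputable def Acoef (j : ℕ) (a : Fin (2 * j + 1)) : ℂ :=
  (1 / 2) * (1 + (-1 : ℂ) ^ ((a : ℤ) - j))

noncomputable def ccoef (j : ℕ) (p : Fin (2 * j + 1) × Fin (2 * j + 1)) : ℂ :=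
  Complex.I ^ ((p.1 : ℤ) - j) * (-1 : ℂ) ^ ((j : ℤ) + ((p.2 : ℤ) - j)) *
    Complex.I ^ ((p.2 : ℤ) - j)

def refl2 (j : ℕ) (b : Fin (2 * j + 1)) : Fin (2 * j + 1) :=
  ⟨2 * j - b, by omega⟩

lemma refl2_refl2 (j : ℕ) (b : Fin (2 * j + 1)) : refl2 j (refl2 j b) = b := by
  have := b.isLt
  simp only [refl2, Fin.ext_iff]
  omega

lemma P_apply (j : ℕ) (p q : Fin (2 * j + 1) × Fin (2 * j + 1)) :
    P j p q = Acoef j p.1 * ((1 / 2) * (if q = p then 1 else 0)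
      + (1 / 2) * ccoef j p * (if q = (p.1, refl2 j p.2) then 1 else 0)) := by
  have h2lt := p.2.isLt
  have h1 : ((p.1 : ℤ) - j = (q.1 : ℤ) - j ∧ (p.2 : ℤ) - j = (q.2 : ℤ) - j) ↔ q = p := by
    rw [Prod.ext_iff, Fin.ext_iff, Fin.ext_iff]
    omega
  have h2 : ((p.1 : ℤ) - j = (q.1 : ℤ) - j ∧ (q.2 : ℤ) - j = -((p.2 : ℤ) - j)) ↔
      q = (p.1, refl2 j p.2) := by
    rw [Prod.ext_iff, Fin.ext_iff, Fin.ext_iff]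
    simp only [refl2]
    omega
  simp only [P, Acoef, ccoef, h1, h2]
  ring

lemma refl2_int (j : ℕ) (b : Fin (2 * j + 1)) :
    ((refl2 j b : Fin (2 * j + 1)) : ℤ) - j = -(((b : ℤ)) - j) := by
  have := b.isLt
  simp only [refl2]
  omega

/-- The projector `P^{0,j}` onto `C₈`-invariants is idempotent: `P² = P`. -/
theorem P_idempotent (j : ℕ) : P j * P j = P j := by
  ext p q
  rw [Matrix.mul_apply]
  have hrr : (((p.1, refl2 j p.2) : Fin (2*j+1) × Fin (2*j+1)).1,
      refl2 j ((p.1, refl2 j p.2) : Fin (2*j+1) × Fin (2*j+1)).2) = p := by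
    simp [refl2_refl2]
  have expand : ∀ r, P j p r * P j r q =
      (if r = p then (1 / 2) * Acoef j p.1 * P j r q else 0)
      + (if r = (p.1, refl2 j p.2) then
          (1 / 2) * Acoef j p.1 * ccoef j p * P j r q else 0) := by
    intro r
    rw [P_apply j p r]
    split_ifs <;> ring
  rw [Finset.sum_congr rfl (fun r _ => expand r), Finset.sum_add_distrib,
    Finset.sum_ite_eq', Finset.sum_ite_eq']
  simp only [Finset.mem_univ, if_true]
  rw [P_apply j p q, P_apply j (p.1, refl2 j p.2) q, hrr]
  rcases Int.even_or_odd ((p.1 : ℤ) - j) with he | ho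
  · have hA : Acoef j p.1 = 1 := by
      rw [Acoef, he.neg_one_zpow]; norm_num
    have hcc : ccoef j p * ccoef j (p.1, refl2 j p.2) = 1 := by
      obtain ⟨k, hk⟩ := he
      simp only [ccoef, refl2_int]
      have e1 : Complex.I ^ ((p.1 : ℤ) - j) * Complex.I ^ ((p.1 : ℤ) - j) = 1 := by
        rw [← zpow_add₀ Complex.I_ne_zero, hk,
          show k + k + (k + k) = 4 * k from by ring, zpow_mul]
        rw [show ((4 : ℤ) : ℤ) = ((4 : ℕ) : ℤ) from rfl, zpow_natCast, Complex.I_pow_four,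
          one_zpow]
      have e2 : (-1 : ℂ) ^ ((j : ℤ) + ((p.2 : ℤ) - j)) *
          (-1 : ℂ) ^ ((j : ℤ) + -((p.2 : ℤ) - j)) = 1 := by
        rw [← zpow_add₀ (by norm_num : (-1 : ℂ) ≠ 0),
          show (j : ℤ) + ((p.2 : ℤ) - j) + ((j : ℤ) + -((p.2 : ℤ) - j)) = 2 * j from by ring,
          zpow_mul]
        norm_num
      have e3 : Complex.I ^ ((p.2 : ℤ) - j) * Complex.I ^ (-((p.2 : ℤ) - j)) = 1 := by
        rw [← zpow_add₀ Complex.I_ne_zero, add_neg_cancel, zpow_zero]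
      calc Complex.I ^ ((p.1 : ℤ) - j) * (-1 : ℂ) ^ ((j : ℤ) + ((p.2 : ℤ) - j)) *
            Complex.I ^ ((p.2 : ℤ) - j) *
            (Complex.I ^ ((p.1 : ℤ) - j) * (-1 : ℂ) ^ ((j : ℤ) + -((p.2 : ℤ) - j)) *
            Complex.I ^ (-((p.2 : ℤ) - j)))
          = (Complex.I ^ ((p.1 : ℤ) - j) * Complex.I ^ ((p.1 : ℤ) - j)) *
            ((-1 : ℂ) ^ ((j : ℤ) + ((p.2 : ℤ) - j)) *
              (-1 : ℂ) ^ ((j : ℤ) + -((p.2 : ℤ) - j))) *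
            (Complex.I ^ ((p.2 : ℤ) - j) * Complex.I ^ (-((p.2 : ℤ) - j))) := by ring
        _ = 1 := by rw [e1, e2, e3]; ring
    rw [hA]
    split_ifs with h1 h2 h3
    · linear_combination (1/4 : ℂ) * hcc
    · linear_combination (1/4 : ℂ) * hcc
    · ring
    · ring
  · have hA : Acoef j p.1 = 0 := by
      rw [Acoef, ho.neg_one_zpow]; ring
    simp [hA]
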